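/- The function g₊ is concave on the interval (−1,1), and the function g₋ is convex on the interval (1 − √(4/3), 1). -/

import Mathlib

open Real Set

/-- `g₊(t) = (1/2)(1 − 1/(1+t)²)`. -/
noncomputable def gPlus (t : ℝ) : ℝ := (1 / 2) * (1 - 1 / (1 + t) ^ 2)

/-- `g₋(t) = (1/2)(√(2/(1−t)² − 1) − 1)`. -/
noncomputable def gMinus (t : ℝ) : ℝ := (1 / 2) * (Real.sqrt (2 / (1 - t) ^ 2 - 1) - 1)

open Filter Topology

private lemma convex_aux {s : Set ℝ} (hs : IsOpen s) (hconv : Convex ℝ s) {f d1 d2 : ℝ → ℝ}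
    (h1 : ∀ x ∈ s, HasDerivAt f (d1 x) x)
    (h2 : ∀ x ∈ s, HasDerivAt d1 (d2 x) x)
    (h0 : ∀ x ∈ s, 0 ≤ d2 x) : ConvexOn ℝ s f := by
  apply convexOn_of_deriv2_nonneg hconv
  · exact fun x hx => (h1 x hx).differentiableAt.continuousAt.continuousWithinAt
  · rw [hs.interior_eq]; exact fun x hx => (h1 x hx).differentiableAt.differentiableWithinAt
  · rw [hs.interior_eq]; intro x hx
    have hd : DifferentiableAt ℝ d1 x := (h2 x hx).differentiableAt
    have heq : deriv f =ᶠ[𝓝 x] d1 := by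
      filter_upwards [hs.mem_nhds hx] with y hy using (h1 y hy).deriv
    exact (hd.congr_of_eventuallyEq heq).differentiableWithinAt
  · rw [hs.interior_eq]; intro x hx
    have heq : deriv f =ᶠ[𝓝 x] d1 := by
      filter_upwards [hs.mem_nhds hx] with y hy using (h1 y hy).deriv
    have h2' : deriv^[2] f x = deriv d1 x := by
      rw [show deriv^[2] f x = deriv (deriv f) x from rfl]
      exact heq.deriv_eq
    rw [h2', (h2 x hx).deriv]
    exact h0 x hx

private lemma concave_aux {s : Set ℝ} (hs : IsOpen s) (hconv : Convex ℝ s) {f d1 d2 : ℝ → ℝ}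
    (h1 : ∀ x ∈ s, HasDerivAt f (d1 x) x)
    (h2 : ∀ x ∈ s, HasDerivAt d1 (d2 x) x)
    (h0 : ∀ x ∈ s, d2 x ≤ 0) : ConcaveOn ℝ s f := by
  have := convex_aux hs hconv (f := fun x => -f x) (d1 := fun x => -d1 x)
    (d2 := fun x => -d2 x)
    (fun x hx => (h1 x hx).neg) (fun x hx => (h2 x hx).neg)
    (fun x hx => by simpa using h0 x hx)
  exact neg_convexOn_iff.mp this

private lemma gPlus_d1 {x : ℝ} (hx : x ∈ Set.Ioo (-1:ℝ) 1) :
    HasDerivAt gPlus (((1+x)^3)⁻¹) x := by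
  have h0 : (0:ℝ) < 1 + x := by linarith [hx.1]
  have h : HasDerivAt (fun t : ℝ => (1+t)^2) (2*(1+x)) x := by
    have := ((hasDerivAt_id x).const_add 1).fun_pow 2
    simpa using this
  have hinv := h.inv (by positivity)
  have := ((hinv.const_mul (1:ℝ)).const_sub 1).const_mul (1/2 : ℝ)
  have this : HasDerivAt _ _ x := this
  convert this using 1
  · rfl
  · rfl
  · rfl
  field_simp

private lemma gPlus_d2 {x : ℝ} (hx : x ∈ Set.Ioo (-1:ℝ) 1) :
    HasDerivAt (fun x : ℝ => ((1+x)^3)⁻¹) (-(3*(1+x)^2) / ((1+x)^3)^2) x := by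
  have h0 : (0:ℝ) < 1 + x := by linarith [hx.1]
  have h : HasDerivAt (fun t : ℝ => (1+t)^3) (3*(1+x)^2) x := by
    have := ((hasDerivAt_id x).const_add 1).fun_pow 3
    simpa using this
  exact h.inv (by positivity)

private lemma gMinus_dom {x : ℝ} (hx : x ∈ Set.Ioo (1 - Real.sqrt (4/3)) 1) :
    (0 < 1 - x) ∧ ((1-x)^2 < 4/3) := by
  constructor
  · linarith [hx.2]
  · have h1 : 1 - x < Real.sqrt (4/3) := by linarith [hx.1]
    have h0 : 0 < 1 - x := by linarith [hx.2]
    nlinarith [Real.sq_sqrt (by norm_num : (4:ℝ)/3 ≥ 0), Real.sqrt_nonneg (4/3:ℝ)]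

private lemma gMinus_d1 {x : ℝ} (h0 : 0 < 1 - x) (h43 : (1-x)^2 < 4/3) :
    HasDerivAt gMinus (((1-x)^2 * Real.sqrt (2 - (1-x)^2))⁻¹) x := by
  have ha : (0:ℝ) < 2 - (1-x)^2 := by nlinarith
  have hc : (0:ℝ) < 2 / (1-x)^2 - 1 := by
    rw [lt_sub_iff_add_lt, lt_div_iff₀ (by positivity)]
    nlinarith
  have hp : HasDerivAt (fun t : ℝ => (1-t)^2) (2*(1-x)*(-1)) x := by
    have := ((hasDerivAt_id x).neg.const_add 1).fun_pow 2
    simpa [sub_eq_add_neg] using this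
  have hc' : HasDerivAt (fun t : ℝ => 2 / (1-t)^2 - 1)
      (-(2*(2*(1-x)*(-1))) / ((1-x)^2)^2) x := by
    have := ((hp.inv (by positivity)).const_mul (2:ℝ)).sub_const 1
    have this : HasDerivAt _ _ x := this
    convert this using 1
    · rfl
    · rfl
    · funext y; simp [div_eq_mul_inv]
    field_simp
  have hs := (hc'.sqrt (ne_of_gt hc)).sub_const 1 |>.const_mul (1/2 : ℝ)
  have hs : HasDerivAt _ _ x := hs
  convert hs using 1
  · rfl
  · rfl
  · rfl
  have hsq : Real.sqrt (2/(1-x)^2 - 1) = Real.sqrt (2 - (1-x)^2) / (1-x) := by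
    rw [show 2/(1-x)^2 - 1 = (2-(1-x)^2)/(1-x)^2 by field_simp,
      Real.sqrt_div ha.le, Real.sqrt_sq h0.le]
  rw [hsq]
  have hsa : 0 < Real.sqrt (2 - (1-x)^2) := Real.sqrt_pos.mpr ha
  field_simp

private lemma gMinus_d2 {x : ℝ} (h0 : 0 < 1 - x) (h43 : (1-x)^2 < 4/3) :
    HasDerivAt (fun x : ℝ => ((1-x)^2 * Real.sqrt (2 - (1-x)^2))⁻¹)
      (-((2*(1-x)*(-1)) * Real.sqrt (2 - (1-x)^2)
          + (1-x)^2 * ((-(2*(1-x)*(-1))) / (2 * Real.sqrt (2 - (1-x)^2))))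
        / ((1-x)^2 * Real.sqrt (2 - (1-x)^2))^2) x := by
  have ha : (0:ℝ) < 2 - (1-x)^2 := by nlinarith
  have hsa : 0 < Real.sqrt (2 - (1-x)^2) := Real.sqrt_pos.mpr ha
  have hp : HasDerivAt (fun t : ℝ => (1-t)^2) (2*(1-x)*(-1)) x := by
    have := ((hasDerivAt_id x).neg.const_add 1).fun_pow 2
    simpa [sub_eq_add_neg] using this
  have haD : HasDerivAt (fun t : ℝ => 2 - (1-t)^2) (-(2*(1-x)*(-1))) x := hp.const_sub 2
  have hq : HasDerivAt (fun t : ℝ => Real.sqrt (2 - (1-t)^2))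
      ((-(2*(1-x)*(-1))) / (2 * Real.sqrt (2 - (1-x)^2))) x := haD.sqrt (ne_of_gt ha)
  exact (hp.mul hq).inv (mul_pos (pow_pos h0 2) hsa).ne'

theorem gPlus_concave_gMinus_convex :
    ConcaveOn ℝ (Set.Ioo (-1 : ℝ) 1) gPlus ∧
      ConvexOn ℝ (Set.Ioo (1 - Real.sqrt (4 / 3)) 1) gMinus := by
  constructor
  · refine concave_aux isOpen_Ioo (convex_Ioo _ _) (fun x hx => gPlus_d1 hx)
      (fun x hx => gPlus_d2 hx) (fun x hx => ?_)
    have h0 : (0:ℝ) < 1 + x := by linarith [hx.1]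
    have : (0:ℝ) < ((1+x)^3)^2 := by positivity
    apply div_nonpos_of_nonpos_of_nonneg
    · nlinarith
    · positivity
  · refine convex_aux isOpen_Ioo (convex_Ioo _ _)
      (fun x hx => gMinus_d1 (gMinus_dom hx).1 (gMinus_dom hx).2)
      (fun x hx => gMinus_d2 (gMinus_dom hx).1 (gMinus_dom hx).2)
      (fun x hx => ?_)
    obtain ⟨h0, h43⟩ := gMinus_dom hx
    have ha : (0:ℝ) < 2 - (1-x)^2 := by nlinarith
    have hsa : 0 < Real.sqrt (2 - (1-x)^2) := Real.sqrt_pos.mpr ha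
    have hsq : Real.sqrt (2 - (1-x)^2) ^ 2 = 2 - (1-x)^2 := Real.sq_sqrt ha.le
    apply div_nonneg _ (sq_nonneg _)
    have key : (1-x)^2 * ((-(2*(1-x)*(-1))) / (2 * Real.sqrt (2 - (1-x)^2)))
        ≤ 2*(1-x) * Real.sqrt (2 - (1-x)^2) := by
      rw [← mul_div_assoc, div_le_iff₀ (by positivity)]
      nlinarith [mul_pos h0 h0, mul_pos h0 hsa]
    linarith [key]
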